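/- arXiv:1912.02466 — 2 statements merged into one kernel-verified Lean document; each statement's English description precedes it below -/
import Mathlib

section
/- Suppose M⁵ is a closed orientable 5-manifold with rational Betti numbers b₀ = b₅ = 1, b₁ = b₄, b₂ = b₃ (Poincaré duality), and total Betti number b₀+b₁+b₂+b₃+b₄+b₅ = 6. Suppose M⁵ = D(F) ∪_E D(N) is a union of two disk bundles glued along their common boundary E, where F and N both have the rational homology of S²×S¹ and E has the rational homology of S¹×S³. Then the Mayer–Vietoris sequence in rational homology for this decomposition cannot be exact; i.e., no such M⁵ exists. -/
/-- there is no closed orientable 5-manifold `M` with rational Betti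
numbers `b₀ = b₅ = 1`, `b₁ = b₄`, `b₂ = b₃`, total Betti number 6, admitting a
disk bundle decomposition `M = D(F) ∪_E D(N)` with `F, N` rational homology
`S²×S¹`'s (Betti numbers 1,1,1,1) and `E` a rational homology `S¹×S³`
(Betti numbers 1,1,0,1,1): the rational Mayer–Vietoris sequence
`H₅(M) → H₄(E) → H₄(F)⊕H₄(N) → H₄(M) → H₃(E) → H₃(F)⊕H₃(N) → H₃(M) → H₂(E)
 → H₂(F)⊕H₂(N) → H₂(M) → H₁(E) → H₁(F)⊕H₁(N) → H₁(M) → H₀(E) → H₀(F)⊕H₀(N)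
 → H₀(M) → 0` (exact at every term after the first) cannot exist. -/
theorem stmt_3 (b1 b2 b3 b4 : ℕ) (h14 : b1 = b4) (h23 : b2 = b3)
    (htotal : 1 + b1 + b2 + b3 + b4 + 1 = 6) :
    ¬ ∃ (g0 : (Fin 1 → ℚ) →ₗ[ℚ] (Fin 1 → ℚ))   -- H₅(M) → H₄(E)
      (g1 : (Fin 1 → ℚ) →ₗ[ℚ] (Fin 0 → ℚ))     -- H₄(E) → H₄(F)⊕H₄(N) = 0
      (g2 : (Fin 0 → ℚ) →ₗ[ℚ] (Fin b4 → ℚ))    -- 0 → H₄(M)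
      (g3 : (Fin b4 → ℚ) →ₗ[ℚ] (Fin 1 → ℚ))    -- H₄(M) → H₃(E)
      (g4 : (Fin 1 → ℚ) →ₗ[ℚ] (Fin 2 → ℚ))     -- H₃(E) → H₃(F)⊕H₃(N)
      (g5 : (Fin 2 → ℚ) →ₗ[ℚ] (Fin b3 → ℚ))    -- H₃(F)⊕H₃(N) → H₃(M)
      (g6 : (Fin b3 → ℚ) →ₗ[ℚ] (Fin 0 → ℚ))    -- H₃(M) → H₂(E) = 0
      (g7 : (Fin 0 → ℚ) →ₗ[ℚ] (Fin 2 → ℚ))     -- 0 → H₂(F)⊕H₂(N)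
      (g8 : (Fin 2 → ℚ) →ₗ[ℚ] (Fin b2 → ℚ))    -- H₂(F)⊕H₂(N) → H₂(M)
      (g9 : (Fin b2 → ℚ) →ₗ[ℚ] (Fin 1 → ℚ))    -- H₂(M) → H₁(E)
      (g10 : (Fin 1 → ℚ) →ₗ[ℚ] (Fin 2 → ℚ))    -- H₁(E) → H₁(F)⊕H₁(N)
      (g11 : (Fin 2 → ℚ) →ₗ[ℚ] (Fin b1 → ℚ))   -- H₁(F)⊕H₁(N) → H₁(M)
      (g12 : (Fin b1 → ℚ) →ₗ[ℚ] (Fin 1 → ℚ))   -- H₁(M) → H₀(E)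
      (g13 : (Fin 1 → ℚ) →ₗ[ℚ] (Fin 2 → ℚ))    -- H₀(E) → H₀(F)⊕H₀(N)
      (g14 : (Fin 2 → ℚ) →ₗ[ℚ] (Fin 1 → ℚ)),   -- H₀(F)⊕H₀(N) → H₀(M)
      Function.Exact g0 g1 ∧ Function.Exact g1 g2 ∧ Function.Exact g2 g3 ∧
      Function.Exact g3 g4 ∧ Function.Exact g4 g5 ∧ Function.Exact g5 g6 ∧
      Function.Exact g6 g7 ∧ Function.Exact g7 g8 ∧ Function.Exact g8 g9 ∧
      Function.Exact g9 g10 ∧ Function.Exact g10 g11 ∧ Function.Exact g11 g12 ∧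
      Function.Exact g12 g13 ∧ Function.Exact g13 g14 ∧
      Function.Surjective g14 := by

  rintro ⟨g0,g1,g2,g3,g4,g5,g6,g7,g8,g9,g10,g11,g12,g13,g14,
    e01,e12,e23,e34,e45,e56,e67,e78,e89,e910,e1011,e1112,e1213,e1314,hsurj⟩
  rw [LinearMap.exact_iff] at e23 e34 e45 e56
  -- g3 is injective since range g2 = 0
  have hg2 : g2 = 0 := Subsingleton.elim _ _
  have hg3inj : Function.Injective g3 := by
    rw [← LinearMap.ker_eq_bot, e23, hg2, LinearMap.range_zero]
  -- g5 is surjective since ker g6 = ⊤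
  have hg6 : g6 = 0 := Subsingleton.elim _ _
  have hg5surj : Function.Surjective g5 := by
    rw [← LinearMap.range_eq_top, ← e56, hg6, LinearMap.ker_zero]
  -- rank-nullity on g4 : (Fin 1 → ℚ) → (Fin 2 → ℚ)
  have hrn4 := LinearMap.finrank_range_add_finrank_ker g4
  have hrn5 := LinearMap.finrank_range_add_finrank_ker g5
  rw [e34] at hrn4
  rw [e45] at hrn5
  have hr3 : Module.finrank ℚ (LinearMap.range g3) = b4 := by
    rw [LinearMap.finrank_range_of_inj hg3inj, Module.finrank_fin_fun]
  have hr5 : Module.finrank ℚ (LinearMap.range g5) = b3 := by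
    rw [LinearMap.range_eq_top.mpr hg5surj, finrank_top, Module.finrank_fin_fun]
  rw [hr3, Module.finrank_fin_fun] at hrn4
  rw [hr5, Module.finrank_fin_fun] at hrn5
  omega
end

section
/- Let Γ be a finite connected graph and α an axial function with values in nonzero linear forms on t_ℚ (modulo sign), satisfying the GKM₂ condition that weights of edges at a common vertex are pairwise linearly independent. Suppose (a_v)_{v∈V} ∈ ℚ^V satisfies: for every edge e joining v to w, a_v·p_v ≡ ± a_w·p_w mod α(e), where p_v is a fixed product of k linear forms each pairwise linearly independent from α(e). If (a_v) is not identically zero, then a_v ≠ 0 for all v. -/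
/-!
Nonzero linear forms are prime in `ℚ[x₁,…,x_n]`, and a linear form divides another only if
they are proportional. So if `a_v = 0` at an edge `vw`, the congruence says that `α(vw)`
divides `a_w · p_w`; since `α(vw)` divides none of the linear factors of `p_w`, the constant
`a_w` must vanish. Vanishing thus spreads along edges, and by connectedness a single zero
forces `a = 0`.
-/

/-- The linear form in `S(t*_ℚ) = ℚ[x₁,…,x_n]` associated to a coefficient
vector `w : Fin n → ℚ`. -/
noncomputable def linF (n : ℕ) (w : Fin n → ℚ) : MvPolynomial (Fin n) ℚ :=
  ∑ i, MvPolynomial.C (w i) * MvPolynomial.X i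

open MvPolynomial

theorem linF_eq_sumSMulX (n : ℕ) (w : Fin n → ℚ) :
    linF n w = sumSMulX (Finsupp.equivFunOnFinite.symm w) := by
  simp [linF, sumSMulX, Finsupp.linearCombination_apply, Finsupp.sum_fintype, smul_eq_C_mul]

theorem coeff_single_linF (n : ℕ) (w : Fin n → ℚ) (i : Fin n) :
    (linF n w).coeff (Finsupp.single i 1) = w i := by
  rw [linF_eq_sumSMulX, coeff_sumSMulX]
  rfl

theorem linF_zero (n : ℕ) : linF n 0 = 0 := by
  simp [linF]

theorem linF_injective (n : ℕ) : Function.Injective (linF n) := fun u v h =>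
  funext fun i => by rw [← coeff_single_linF n u i, h, coeff_single_linF]

theorem linF_mul_C (n : ℕ) (w : Fin n → ℚ) (c : ℚ) : linF n w * C c = linF n (c • w) := by
  simp only [linF, Finset.sum_mul, Pi.smul_apply, smul_eq_mul, C_mul]
  exact Finset.sum_congr rfl fun i _ => by ring

theorem irreducible_linF {n : ℕ} {w : Fin n → ℚ} (hw : w ≠ 0) : Irreducible (linF n w) := by
  rw [linF_eq_sumSMulX]
  obtain ⟨i, hi⟩ := Function.ne_iff.mp hw
  refine irreducible_sumSMulX _ ⟨i, by simpa using hi⟩ fun r hr => ?_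
  exact (ne_zero_of_dvd_ne_zero hi (hr i)).isUnit

theorem prime_linF {n : ℕ} {w : Fin n → ℚ} (hw : w ≠ 0) : Prime (linF n w) :=
  (irreducible_linF hw).prime

theorem not_linF_dvd_linF {n : ℕ} {u v : Fin n → ℚ} (h : LinearIndependent ℚ ![u, v]) :
    ¬ linF n u ∣ linF n v := by
  have hu : u ≠ 0 := by simpa using h.ne_zero 0
  have hv : v ≠ 0 := by simpa using h.ne_zero 1
  intro hdvd
  obtain ⟨μ, hμ⟩ := (irreducible_linF hu).associated_of_dvd (irreducible_linF hv) hdvd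
  obtain ⟨c, -, hc⟩ := isUnit_iff_eq_C_of_isReduced.mp μ.isUnit
  rw [hc, linF_mul_C] at hμ
  exact (LinearIndependent.pair_iff' hu).mp h c (linF_injective n hμ)

theorem eq_zero_of_linF_dvd_C_mul_prod {n k : ℕ} {u : Fin n → ℚ} {q : Fin k → Fin n → ℚ}
    (hq : ∀ i, LinearIndependent ℚ ![u, q i]) {c : ℚ}
    (h : linF n u ∣ C c * ∏ i, linF n (q i)) : c = 0 := by
  by_contra hc
  rw [((Ne.isUnit hc).map C).dvd_mul_left] at h
  obtain ⟨i, hi⟩ : ∃ i, linF n u ∣ linF n (q i) := by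
    by_cases hu : u = 0
    · rw [hu, linF_zero, zero_dvd_iff, Finset.prod_eq_zero_iff] at h
      obtain ⟨i, -, hi⟩ := h
      exact ⟨i, hi ▸ dvd_zero _⟩
    · obtain ⟨i, -, hi⟩ := (prime_linF hu).exists_mem_finset_dvd h
      exact ⟨i, hi⟩
  exact not_linF_dvd_linF (hq i) hi

theorem SimpleGraph.Reachable.of_forall_adj_imp {V : Type*} {G : SimpleGraph V} {P : V → Prop}
    (hP : ∀ v w, G.Adj v w → P v → P w) {u v : V} (huv : G.Reachable u v) (hu : P u) : P v := by
  obtain ⟨p⟩ := huv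
  induction p with
  | nil => exact hu
  | cons h _ ih => exact ih (hP _ _ h hu)

theorem stmt_16_general (n k : ℕ) (V : Type)
    (G : SimpleGraph V) (hconn : G.Connected)
    (A : V → V → (Fin n → ℚ))
    (q : V → Fin k → (Fin n → ℚ))
    (hpind : ∀ v w, G.Adj v w → ∀ i,
        LinearIndependent ℚ ![A v w, q v i] ∧ LinearIndependent ℚ ![A v w, q w i])
    (a : V → ℚ)
    (hdiv : ∀ v w, G.Adj v w →
        linF n (A v w) ∣
          (MvPolynomial.C (a v) * ∏ i, linF n (q v i)
            - MvPolynomial.C (a w) * ∏ i, linF n (q w i)) ∨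
        linF n (A v w) ∣
          (MvPolynomial.C (a v) * ∏ i, linF n (q v i)
            + MvPolynomial.C (a w) * ∏ i, linF n (q w i)))
    (hnz : ∃ v, a v ≠ 0) :
    ∀ v, a v ≠ 0 := by
  have zero_spreads : ∀ v w, G.Adj v w → a v = 0 → a w = 0 := by
    intro v w hvw hv
    have hzero : linF n (A v w) ∣ C (a v) * ∏ i, linF n (q v i) := by simp [hv]
    refine eq_zero_of_linF_dvd_C_mul_prod (fun i => (hpind v w hvw i).2) ?_
    rcases hdiv v w hvw with h | h
    · exact (dvd_sub_right hzero).mp h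
    · exact (dvd_add_right hzero).mp h
  obtain ⟨u, hu⟩ := hnz
  exact fun v => (hconn u v).of_forall_adj_imp
    (fun x y hxy hx => mt (zero_spreads y x hxy.symm) hx) hu

/-- Let `Γ` be a finite connected graph with axial function `α`
(edge `vw` carries the nonzero linear form with coefficient vector `A v w`,
well defined up to sign) satisfying the GKM₂ condition that the weights of
edges at a common vertex are pairwise linearly independent.  Suppose
`(a_v) ∈ ℚ^V` satisfies, for every edge `vw`,
`a_v·p_v ≡ ± a_w·p_w mod α(e)`, where `p_v = ∏ᵢ linF(q v i)` is a fixed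
product of `k` linear forms each pairwise linearly independent from `α(e)`.
If `(a_v)` is not identically zero, then `a_v ≠ 0` for all `v`. -/
theorem stmt_16 (n k : ℕ) (V : Type) [Fintype V]
    (G : SimpleGraph V) (hconn : G.Connected)
    (A : V → V → (Fin n → ℚ))
    (hsymA : ∀ v w, A v w = A w v)
    (hGKM2 : ∀ v w w', G.Adj v w → G.Adj v w' → w ≠ w' →
        LinearIndependent ℚ ![A v w, A v w'])
    (q : V → Fin k → (Fin n → ℚ))
    (hpind : ∀ v w, G.Adj v w → ∀ i,
        LinearIndependent ℚ ![A v w, q v i] ∧ LinearIndependent ℚ ![A v w, q w i])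
    (a : V → ℚ)
    (hdiv : ∀ v w, G.Adj v w →
        linF n (A v w) ∣
          (MvPolynomial.C (a v) * ∏ i, linF n (q v i)
            - MvPolynomial.C (a w) * ∏ i, linF n (q w i)) ∨
        linF n (A v w) ∣
          (MvPolynomial.C (a v) * ∏ i, linF n (q v i)
            + MvPolynomial.C (a w) * ∏ i, linF n (q w i)))
    (hnz : ∃ v, a v ≠ 0) :
    ∀ v, a v ≠ 0 :=
  stmt_16_general n k V G hconn A q hpind a hdiv hnz
end
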